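/- Let V be a model category. Suppose given: a cofibration i : A → B; a fibration p : X → Y; maps u : A → X and v : B → Y with p ∘ u = v ∘ i; a weak equivalence w : B' → B; and a map f : A → B' with w ∘ f = i. Then there exists a lift l : B → X with l ∘ i = u and p ∘ l = v if and only if there exists a map l' : B' → X with l' ∘ f = u and p ∘ l' = v ∘ w. -/

import Mathlib

/- Factor `w = j ≫ q` with `j` a trivial cofibration and `q` a fibration, hence a trivial
fibration by two-out-of-three. Lifting `l'` against `p` along `j` moves the problem to `q`, and
since `i` lifts against `q` there is a section `s` of `q` under `A`; precomposing with `s`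
gives the lift. -/

open CategoryTheory Limits

/-- A morphism `f` is a retract of a morphism `g` (in the arrow category). -/
def IsRetractOfMor {C : Type*} [Category C] {X Y X' Y' : C}
    (f : X ⟶ Y) (g : X' ⟶ Y') : Prop :=
  ∃ (iX : X ⟶ X') (rX : X' ⟶ X) (iY : Y ⟶ Y') (rY : Y' ⟶ Y),
    iX ≫ rX = 𝟙 X ∧ iY ≫ rY = 𝟙 Y ∧ iX ≫ g = f ≫ iY ∧ g ≫ rY = rX ≫ f

/-- A model structure in Quillen's sense on a category `C`: three classes of morphisms
(weak equivalences, cofibrations, fibrations) satisfying the two-out-of-three, retract,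
lifting, and factorization axioms.  (Completeness and cocompleteness of `C` are imposed
separately via `HasLimits`/`HasColimits` instances.) -/
structure ModelStructure (C : Type*) [Category C] where
  weq : MorphismProperty C
  cof : MorphismProperty C
  fib : MorphismProperty C
  /-- two-out-of-three: composition -/
  weq_comp : ∀ {X Y Z : C} (f : X ⟶ Y) (g : Y ⟶ Z), weq f → weq g → weq (f ≫ g)
  /-- two-out-of-three: left cancellation -/
  weq_of_precomp : ∀ {X Y Z : C} (f : X ⟶ Y) (g : Y ⟶ Z), weq f → weq (f ≫ g) → weq g
  /-- two-out-of-three: right cancellation -/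
  weq_of_postcomp : ∀ {X Y Z : C} (f : X ⟶ Y) (g : Y ⟶ Z), weq g → weq (f ≫ g) → weq f
  /-- weak equivalences are closed under retracts -/
  weq_retract : ∀ {X Y X' Y' : C} (f : X ⟶ Y) (g : X' ⟶ Y'),
    IsRetractOfMor f g → weq g → weq f
  /-- cofibrations are closed under retracts -/
  cof_retract : ∀ {X Y X' Y' : C} (f : X ⟶ Y) (g : X' ⟶ Y'),
    IsRetractOfMor f g → cof g → cof f
  /-- fibrations are closed under retracts -/
  fib_retract : ∀ {X Y X' Y' : C} (f : X ⟶ Y) (g : X' ⟶ Y'),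
    IsRetractOfMor f g → fib g → fib f
  /-- lifting of cofibrations against trivial fibrations -/
  lift_cof_trivFib : ∀ {A B X Y : C} (i : A ⟶ B) (p : X ⟶ Y),
    cof i → fib p → weq p → HasLiftingProperty i p
  /-- lifting of trivial cofibrations against fibrations -/
  lift_trivCof_fib : ∀ {A B X Y : C} (i : A ⟶ B) (p : X ⟶ Y),
    cof i → weq i → fib p → HasLiftingProperty i p
  /-- factorization as a cofibration followed by a trivial fibration -/
  fact_cof_trivFib : ∀ {X Y : C} (f : X ⟶ Y),
    ∃ (Z : C) (i : X ⟶ Z) (p : Z ⟶ Y), cof i ∧ fib p ∧ weq p ∧ i ≫ p = f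
  /-- factorization as a trivial cofibration followed by a fibration -/
  fact_trivCof_fib : ∀ {X Y : C} (f : X ⟶ Y),
    ∃ (Z : C) (i : X ⟶ Z) (p : Z ⟶ Y), cof i ∧ weq i ∧ fib p ∧ i ≫ p = f

namespace ModelStructure

variable {C : Type*} [Category C] (M : ModelStructure C)

theorem exists_trivCof_trivFib_factorization {X Y : C} (w : X ⟶ Y) (hw : M.weq w) :
    ∃ (Z : C) (j : X ⟶ Z) (q : Z ⟶ Y),
      M.cof j ∧ M.weq j ∧ M.fib q ∧ M.weq q ∧ j ≫ q = w := by
  obtain ⟨Z, j, q, hjc, hjw, hqf, rfl⟩ := M.fact_trivCof_fib w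
  exact ⟨Z, j, q, hjc, hjw, hqf, M.weq_of_precomp j q hjw hw, rfl⟩

theorem exists_section_under_of_cof_of_trivFib {A B Z : C} (i : A ⟶ B) (q : Z ⟶ B)
    (g : A ⟶ Z) (hi : M.cof i) (hqf : M.fib q) (hqw : M.weq q) (hg : g ≫ q = i) :
    ∃ s : B ⟶ Z, i ≫ s = g ∧ s ≫ q = 𝟙 B := by
  have := M.lift_cof_trivFib i q hi hqf hqw
  have sq : CommSq g i q (𝟙 B) := ⟨by rw [hg, Category.comp_id]⟩
  exact ⟨sq.lift, sq.fac_left, sq.fac_right⟩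

theorem exists_lift_of_lift_over_trivFib {A B Z X Y : C} (i : A ⟶ B) (p : X ⟶ Y)
    (v : B ⟶ Y) (q : Z ⟶ B) (g : A ⟶ Z) (m : Z ⟶ X) (hi : M.cof i) (hqf : M.fib q)
    (hqw : M.weq q) (hg : g ≫ q = i) (hm : m ≫ p = q ≫ v) :
    ∃ l : B ⟶ X, i ≫ l = g ≫ m ∧ l ≫ p = v := by
  obtain ⟨s, hs, hsq⟩ := M.exists_section_under_of_cof_of_trivFib i q g hi hqf hqw hg
  refine ⟨s ≫ m, by rw [reassoc_of% hs], ?_⟩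
  rw [Category.assoc, hm, reassoc_of% hsq]

end ModelStructure

theorem lifting_transfer_general {C : Type*} [Category C]
    (M : ModelStructure C) {A B B' X Y : C}
    (i : A ⟶ B) (p : X ⟶ Y) (u : A ⟶ X) (v : B ⟶ Y) (w : B' ⟶ B) (f : A ⟶ B')
    (hi : M.cof i) (hp : M.fib p) (hw : M.weq w)
    (hf : f ≫ w = i) :
    (∃ l : B ⟶ X, i ≫ l = u ∧ l ≫ p = v) ↔
    (∃ l' : B' ⟶ X, f ≫ l' = u ∧ l' ≫ p = w ≫ v) := by
  constructor
  · rintro ⟨l, hl, hlp⟩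
    exact ⟨w ≫ l, by rw [reassoc_of% hf, hl], by rw [Category.assoc, hlp]⟩
  · rintro ⟨l', hl', hl'p⟩
    obtain ⟨Z, j, q, hjc, hjw, hqf, hqw, rfl⟩ := M.exists_trivCof_trivFib_factorization w hw
    have := M.lift_trivCof_fib j p hjc hjw hp
    have sq : CommSq l' j p (q ≫ v) := ⟨by rw [hl'p, Category.assoc]⟩
    obtain ⟨l, hl, hlp⟩ := M.exists_lift_of_lift_over_trivFib i p v q (f ≫ j) sq.lift hi hqf
      hqw (by rw [Category.assoc, hf]) sq.fac_right
    exact ⟨l, by rw [hl, Category.assoc, sq.fac_left, hl'], hlp⟩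

/-- lifting-transfer lemma: given a cofibration `i : A ⟶ B`, a fibration
`p : X ⟶ Y`, maps `u : A ⟶ X`, `v : B ⟶ Y` with `p ∘ u = v ∘ i`, a weak equivalence
`w : B' ⟶ B` and a map `f : A ⟶ B'` with `w ∘ f = i`, a lift `l : B ⟶ X` (with
`l ∘ i = u` and `p ∘ l = v`) exists iff a map `l' : B' ⟶ X` with `l' ∘ f = u` and
`p ∘ l' = v ∘ w` exists. -/
theorem lifting_transfer {C : Type*} [Category C] [HasLimits C] [HasColimits C]
    (M : ModelStructure C) {A B B' X Y : C}
    (i : A ⟶ B) (p : X ⟶ Y) (u : A ⟶ X) (v : B ⟶ Y) (w : B' ⟶ B) (f : A ⟶ B')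
    (hi : M.cof i) (hp : M.fib p) (hw : M.weq w)
    (hsq : u ≫ p = i ≫ v) (hf : f ≫ w = i) :
    (∃ l : B ⟶ X, i ≫ l = u ∧ l ≫ p = v) ↔
    (∃ l' : B' ⟶ X, f ≫ l' = u ∧ l' ≫ p = w ≫ v) :=
  lifting_transfer_general M i p u v w f hi hp hw hf
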